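/- arXiv:1705.10658 — 2 statements merged into one kernel-verified Lean document; each statement's English description precedes it below -/
import Mathlib

section
/- Every nonzero Q ∈ K⟦x⟧[y] admits, for every d ∈ ℤ, a finite basic root set to precision d. -/
open Polynomial PowerSeries

/-- `Q|_{x=0}` : set `x = 0` in every coefficient. -/
noncomputable def atZero {K : Type*} [Field K] (Q : Polynomial (PowerSeries K)) : Polynomial K :=
  Q.map (PowerSeries.constantCoeff : PowerSeries K →+* K)

/-- `Q(f + x^t y)` : substitute `f + x^t·y` for `y`. -/
noncomputable def shift {K : Type*} [Field K] (Q : Polynomial (PowerSeries K))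
    (f : PowerSeries K) (t : ℕ) : Polynomial (PowerSeries K) :=
  Q.comp (Polynomial.C f + Polynomial.C ((PowerSeries.X : PowerSeries K) ^ t) * Polynomial.X)

/-- `roots(Q, d)`: all of `K⟦x⟧` if `d ≤ 0`, else `{f | Q(f) ≡ 0 mod x^d}`. -/
def seriesRoots {K : Type*} [Field K] (Q : Polynomial (PowerSeries K)) (d : ℤ) :
    Set (PowerSeries K) :=
  {f | 0 < d → (PowerSeries.X : PowerSeries K) ^ d.toNat ∣ Polynomial.eval f Q}

/-- `(F i)ᵢ` is a basic root set of `Q` to precision `d`. -/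
def IsBasicRootSet {K : Type*} [Field K] (Q : Polynomial (PowerSeries K)) (d : ℤ)
    {ι : Type} [Fintype ι] (F : ι → Polynomial K × ℕ) : Prop :=
  if 0 < d then
    (∀ i, Polynomial.C ((PowerSeries.X : PowerSeries K) ^ d.toNat) ∣
        shift Q (((F i).1 : Polynomial K) : PowerSeries K) (F i).2) ∧
    seriesRoots Q d =
      ⋃ i, {g | ∃ h : PowerSeries K,
        g = (((F i).1 : Polynomial K) : PowerSeries K) + (PowerSeries.X : PowerSeries K) ^ (F i).2 * h}
  else Set.range F = {(0, 0)}

/-- the root multiplicity of `(f, t)` in `Q` is `m`. -/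
def HasRootMultiplicity {K : Type*} [Field K] (Q : Polynomial (PowerSeries K))
    (f : Polynomial K) (t : ℕ) (m : ℕ) : Prop :=
  ∃ (g : Polynomial K) (c : K) (s : ℕ) (R : Polynomial (PowerSeries K)),
    f = g + Polynomial.C c * Polynomial.X ^ (t - 1) ∧
    g.degree < ((t - 1 : ℕ) : WithBot ℕ) ∧
    shift Q ((g : Polynomial K) : PowerSeries K) (t - 1)
      = Polynomial.C ((PowerSeries.X : PowerSeries K) ^ s) * R ∧
    atZero R ≠ 0 ∧
    m = (atZero R).rootMultiplicity c

/-- `(F i)ᵢ` is a reduced root set of `Q` to precision `d`. -/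
def IsReducedRootSet {K : Type*} [Field K] (Q : Polynomial (PowerSeries K)) (d : ℤ)
    {ι : Type} [Fintype ι] (F : ι → Polynomial K × ℕ) : Prop :=
  IsBasicRootSet Q d F ∧
  (0 < d → ∃ m : ι → ℕ,
    (∀ i, (F i).1 ≠ 0) ∧
    (∀ i, HasRootMultiplicity Q (F i).1 (F i).2 (m i)) ∧
    (∀ i, 1 ≤ m i) ∧
    (∀ i (s : ℕ) (Qi : Polynomial (PowerSeries K)),
      shift Q (((F i).1 : Polynomial K) : PowerSeries K) (F i).2
        = Polynomial.C ((PowerSeries.X : PowerSeries K) ^ s) * Qi →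
      atZero Qi ≠ 0 → (atZero Qi).natDegree ≤ m i) ∧
    (∑ i, m i) ≤ (atZero Q).natDegree)

/-!
Induction on the precision `n`. If `x ∣ Q`, write `Q = x·Q'`; the roots of `Q` to precision
`n + 1` are those of `Q'` to precision `n`. Otherwise the constant term `c` of a root must be a
root of `Q|x=0`, and `f = c + x·g` is a root of `Q` exactly when `g` is a root of `Q(c + x y)`,
which is divisible by `x` because `Q(c + x y)|x=0 = Q|x=0(c) = 0`. Either way the recursion
reaches precision `0`, where `(0, 0)` is a basic root set, and finitely many branches arise since
`Q|x=0 ≠ 0` has finitely many roots.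
-/

section

variable {K : Type*} [Field K]

theorem eval_shift (Q : K⟦X⟧[X]) (f g : K⟦X⟧) (t : ℕ) :
    (shift Q f t).eval g = Q.eval (f + PowerSeries.X ^ t * g) := by
  simp [shift, eval_comp]

theorem shift_shift (Q : K⟦X⟧[X]) (f g : K⟦X⟧) (t u : ℕ) :
    shift (shift Q f t) g u = shift Q (f + PowerSeries.X ^ t * g) (t + u) := by
  simp only [shift, comp_assoc, add_comp, mul_comp, C_comp, X_comp, pow_add, map_add, map_mul]
  ring_nf

theorem shift_C_mul (a : K⟦X⟧) (Q : K⟦X⟧[X]) (f : K⟦X⟧) (t : ℕ) :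
    shift (Polynomial.C a * Q) f t = Polynomial.C a * shift Q f t := by
  simp [shift, mul_comp]

theorem constantCoeff_eval (Q : K⟦X⟧[X]) (f : K⟦X⟧) :
    constantCoeff (Q.eval f) = (atZero Q).eval (constantCoeff f) := by
  rw [atZero, eval_map, eval, hom_eval₂]
  rfl

theorem atZero_eq_zero_iff (Q : K⟦X⟧[X]) : atZero Q = 0 ↔ Polynomial.C PowerSeries.X ∣ Q := by
  simp [Polynomial.ext_iff, C_dvd_iff_dvd_coeff, PowerSeries.X_dvd_iff, atZero]

theorem atZero_shift_C_one (Q : K⟦X⟧[X]) (c : K) :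
    atZero (shift Q (PowerSeries.C c) 1) = Polynomial.C ((atZero Q).eval c) := by
  simp [atZero, shift, Polynomial.map_comp, comp_C]

def IsBasicRootList (Q : K⟦X⟧[X]) (n : ℕ) (L : List (K[X] × ℕ)) : Prop :=
  (∀ p ∈ L, Polynomial.C (PowerSeries.X ^ n) ∣ shift Q (p.1 : K⟦X⟧) p.2) ∧
  ∀ f : K⟦X⟧, PowerSeries.X ^ n ∣ Q.eval f ↔ ∃ p ∈ L, ∃ h, f = (p.1 : K⟦X⟧) + PowerSeries.X ^ p.2 * h

theorem isBasicRootList_zero (Q : K⟦X⟧[X]) : IsBasicRootList Q 0 [(0, 0)] := by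
  simp [IsBasicRootList]

theorem IsBasicRootList.C_X_pow_mul {Q : K⟦X⟧[X]} {n : ℕ} {L : List (K[X] × ℕ)}
    (hL : IsBasicRootList Q n L) (s : ℕ) :
    IsBasicRootList (Polynomial.C (PowerSeries.X ^ s) * Q) (n + s) L := by
  have hX : (PowerSeries.X : K⟦X⟧) ^ s ≠ 0 := pow_ne_zero s PowerSeries.X_ne_zero
  refine ⟨fun p hp => ?_, fun f => ?_⟩
  · rw [shift_C_mul, add_comm, pow_add, map_mul]
    exact mul_dvd_mul_left _ (hL.1 p hp)
  · rw [eval_mul, eval_C, add_comm, pow_add, mul_dvd_mul_iff_left hX]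
    exact hL.2 f

theorem isBasicRootList_flatMap {Q : K⟦X⟧[X]} {n : ℕ} (hn : 0 < n) (cs : List K)
    (hcs : ∀ c, (atZero Q).IsRoot c → c ∈ cs) (L : K → List (K[X] × ℕ))
    (hL : ∀ c ∈ cs, IsBasicRootList (shift Q (PowerSeries.C c) 1) n (L c)) :
    IsBasicRootList Q n
      (cs.flatMap fun c => (L c).map fun p => (Polynomial.C c + Polynomial.X * p.1, 1 + p.2)) := by
  have coe_lift (c : K) (q : K[X]) : ((Polynomial.C c + Polynomial.X * q : K[X]) : K⟦X⟧) =
      PowerSeries.C c + PowerSeries.X * (q : K⟦X⟧) := by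
    simp
  have eval_shift_one (c : K) (g : K⟦X⟧) :
      (shift Q (PowerSeries.C c) 1).eval g = Q.eval (PowerSeries.C c + PowerSeries.X * g) := by
    rw [eval_shift, pow_one]
  refine ⟨?_, fun f => ⟨fun hf => ?_, ?_⟩⟩
  · simp only [List.mem_flatMap, List.mem_map]
    rintro _ ⟨c, hc, q, hq, rfl⟩
    have h := (hL c hc).1 q hq
    rwa [shift_shift, pow_one, ← coe_lift] at h
  · set c := constantCoeff f
    have hroot : (atZero Q).IsRoot c := by
      rw [IsRoot, ← constantCoeff_eval, ← PowerSeries.X_dvd_iff]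
      exact (dvd_pow_self _ hn.ne').trans hf
    obtain ⟨g, hfg⟩ : ∃ g, f = PowerSeries.C c + PowerSeries.X * g :=
      ⟨_, by rw [mul_comm, add_comm]; exact f.eq_shift_mul_X_add_const⟩
    rw [hfg, ← eval_shift_one] at hf
    obtain ⟨q, hq, h, hg⟩ := ((hL c (hcs c hroot)).2 g).1 hf
    refine ⟨_, List.mem_flatMap.2 ⟨c, hcs c hroot, List.mem_map_of_mem hq⟩, h, ?_⟩
    rw [hfg, hg, coe_lift]
    ring
  · simp only [List.mem_flatMap, List.mem_map]
    rintro ⟨_, ⟨c, hc, q, hq, rfl⟩, h, rfl⟩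
    have hf : ((Polynomial.C c + Polynomial.X * q.1 : K[X]) : K⟦X⟧) + PowerSeries.X ^ (1 + q.2) * h
        = PowerSeries.C c + PowerSeries.X * ((q.1 : K⟦X⟧) + PowerSeries.X ^ q.2 * h) := by
      rw [coe_lift]
      ring
    rw [hf, ← eval_shift_one]
    exact ((hL c hc).2 _).2 ⟨q, hq, h, rfl⟩

theorem exists_isBasicRootList (Q : K⟦X⟧[X]) (n : ℕ) : ∃ L, IsBasicRootList Q n L := by
  induction n generalizing Q with
  | zero => exact ⟨_, isBasicRootList_zero Q⟩
  | succ n ih =>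
    have of_C_X_dvd {P : K⟦X⟧[X]} (hP : Polynomial.C PowerSeries.X ∣ P) :
        ∃ L, IsBasicRootList P (n + 1) L := by
      obtain ⟨P', rfl⟩ := hP
      obtain ⟨L, hL⟩ := ih P'
      exact ⟨L, by simpa using hL.C_X_pow_mul 1⟩
    by_cases hQ : atZero Q = 0
    · exact of_C_X_dvd ((atZero_eq_zero_iff Q).1 hQ)
    · have hshift (c : K) (hc : c ∈ (atZero Q).roots.toList) :
          ∃ L, IsBasicRootList (shift Q (PowerSeries.C c) 1) (n + 1) L := by
        refine of_C_X_dvd ((atZero_eq_zero_iff _).1 ?_)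
        rw [Multiset.mem_toList, mem_roots hQ] at hc
        rw [atZero_shift_C_one, hc.eq_zero, map_zero]
      choose! L hL using hshift
      exact ⟨_, isBasicRootList_flatMap n.succ_pos _
        (fun c hc => by rwa [Multiset.mem_toList, mem_roots hQ]) L hL⟩

theorem IsBasicRootList.isBasicRootSet {Q : K⟦X⟧[X]} {d : ℤ} {L : List (K[X] × ℕ)}
    (hd : 0 < d) (hL : IsBasicRootList Q d.toNat L) : IsBasicRootSet Q d L.get := by
  rw [IsBasicRootSet, if_pos hd]
  refine ⟨fun i => hL.1 _ (L.get_mem i), Set.ext fun f => ?_⟩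
  simp only [seriesRoots, Set.mem_ofPred_eq, Set.mem_iUnion, hd, forall_const, hL.2 f]
  constructor
  · rintro ⟨p, hp, hf⟩
    obtain ⟨i, rfl⟩ := List.mem_iff_get.1 hp
    exact ⟨i, hf⟩
  · rintro ⟨i, hf⟩
    exact ⟨_, L.get_mem i, hf⟩

end

theorem exists_basic_root_set_general {K : Type*} [Field K]
    (Q : Polynomial (PowerSeries K)) (d : ℤ) :
    ∃ (ℓ : ℕ) (F : Fin ℓ → Polynomial K × ℕ), IsBasicRootSet Q d F := by
  rcases lt_or_ge 0 d with hd | hd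
  · obtain ⟨L, hL⟩ := exists_isBasicRootList Q d.toNat
    exact ⟨L.length, L.get, hL.isBasicRootSet hd⟩
  · refine ⟨1, fun _ => (0, 0), ?_⟩
    rw [IsBasicRootSet, if_neg hd.not_gt]
    exact Set.range_const

/-- every nonzero `Q ∈ K⟦x⟧[y]` admits, for every `d ∈ ℤ`, a finite basic
root set to precision `d`. -/
theorem exists_basic_root_set {K : Type*} [Field K]
    (Q : Polynomial (PowerSeries K)) (hQ : Q ≠ 0) (d : ℤ) :
    ∃ (ℓ : ℕ) (F : Fin ℓ → Polynomial K × ℕ), IsBasicRootSet Q d F :=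
  exists_basic_root_set_general Q d
end

section
/- Let Q ∈ K⟦x⟧[y] with Q|x=0 ≠ 0, and let A ∈ K⟦x⟧[y] be its affine factor. Then for every d ∈ ℤ, any reduced root set of A to precision d is also a reduced root set of Q to precision d. -/
/-!
Since `B|x=0` is a nonzero constant, `B(f)` is a unit of `K⟦x⟧` for every `f`, so `A` and `A·B`
have the same root sets, and every shift `B(f + x^t y)` still reduces to that constant at `x = 0`.
As `x` is prime in `K⟦x⟧[y]` and does not divide such a shift, the powers of `x` extractable from
`(A·B)(f + x^t y)` are those extractable from `A(f + x^t y)`, and the reductions at `x = 0` then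
differ by a nonzero constant factor, which changes neither degrees nor root multiplicities.
-/

open Polynomial PowerSeries

section AffineFactor

variable {K : Type*} [Field K]

lemma atZero_mul (P R : Polynomial (PowerSeries K)) : atZero (P * R) = atZero P * atZero R :=
  Polynomial.map_mul _

lemma shift_mul (P R : Polynomial (PowerSeries K)) (f : PowerSeries K) (t : ℕ) :
    shift (P * R) f t = shift P f t * shift R f t :=
  Polynomial.mul_comp _ _ _

lemma atZero_shift_of_atZero_eq_C {B : Polynomial (PowerSeries K)} {c : K}
    (hB : atZero B = Polynomial.C c) (f : PowerSeries K) (t : ℕ) :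
    atZero (shift B f t) = Polynomial.C c := by
  rw [shift, atZero, Polynomial.map_comp, ← atZero, hB, Polynomial.C_comp]

lemma constantCoeff_eval_s16 (B : Polynomial (PowerSeries K)) (f : PowerSeries K) :
    constantCoeff (B.eval f) = (atZero B).eval (constantCoeff f) := by
  rw [atZero, eval_map, eval₂_hom]

lemma isUnit_eval_of_atZero_eq_C {B : Polynomial (PowerSeries K)} {c : K} (hc : c ≠ 0)
    (hB : atZero B = Polynomial.C c) (f : PowerSeries K) : IsUnit (B.eval f) := by
  rw [PowerSeries.isUnit_iff_constantCoeff, constantCoeff_eval_s16, hB, eval_C]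
  exact hc.isUnit

lemma atZero_eq_zero_of_C_X_dvd {P : Polynomial (PowerSeries K)}
    (h : Polynomial.C (PowerSeries.X : PowerSeries K) ∣ P) : atZero P = 0 := by
  obtain ⟨S, rfl⟩ := h
  rw [atZero_mul, atZero, Polynomial.map_C, constantCoeff_X, map_zero, zero_mul]

lemma exists_eq_C_X_pow_mul_of_mul_eq {P R Qi : Polynomial (PowerSeries K)} {s : ℕ}
    (hR : atZero R ≠ 0) (h : P * R = Polynomial.C ((PowerSeries.X : PowerSeries K) ^ s) * Qi) :
    ∃ P', P = Polynomial.C ((PowerSeries.X : PowerSeries K) ^ s) * P' ∧ P' * R = Qi := by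
  have hprime : Prime (Polynomial.C (PowerSeries.X : PowerSeries K)) :=
    prime_C_iff.mpr PowerSeries.X_prime
  obtain ⟨P', rfl⟩ := hprime.pow_dvd_of_dvd_mul_right s (mt atZero_eq_zero_of_C_X_dvd hR)
    ⟨Qi, by rw [h, map_pow]⟩
  refine ⟨P', by rw [map_pow], ?_⟩
  apply mul_left_cancel₀ (pow_ne_zero s (Polynomial.C_ne_zero.mpr PowerSeries.X_ne_zero))
  rw [← mul_assoc, h, map_pow]

lemma seriesRoots_mul_of_isUnit_eval {A B : Polynomial (PowerSeries K)}
    (hB : ∀ f, IsUnit (B.eval f)) (d : ℤ) : seriesRoots (A * B) d = seriesRoots A d := by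
  ext f
  simp only [seriesRoots, Set.mem_ofPred_eq, eval_mul, (hB f).dvd_mul_right]

lemma IsBasicRootSet.mul_of_isUnit_eval {A B : Polynomial (PowerSeries K)} {d : ℤ}
    {ι : Type} [Fintype ι] {F : ι → Polynomial K × ℕ} (hF : IsBasicRootSet A d F)
    (hB : ∀ f, IsUnit (B.eval f)) : IsBasicRootSet (A * B) d F := by
  unfold IsBasicRootSet at hF ⊢
  split_ifs at hF ⊢
  · obtain ⟨hdvd, hroots⟩ := hF
    exact ⟨fun i => by rw [shift_mul]; exact (hdvd i).mul_right _,
      by rw [seriesRoots_mul_of_isUnit_eval hB, hroots]⟩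
  · exact hF

lemma HasRootMultiplicity.mul_of_atZero_eq_C {A B : Polynomial (PowerSeries K)}
    {f : Polynomial K} {t m : ℕ} {c : K} (h : HasRootMultiplicity A f t m) (hc : c ≠ 0)
    (hB : atZero B = Polynomial.C c) : HasRootMultiplicity (A * B) f t m := by
  obtain ⟨g, a, s, R, hf, hg, hshift, hR, hm⟩ := h
  have hRB : atZero R * Polynomial.C c ≠ 0 := mul_ne_zero hR (Polynomial.C_ne_zero.mpr hc)
  refine ⟨g, a, s, R * shift B (g : PowerSeries K) (t - 1), hf, hg,
    by rw [shift_mul, hshift, mul_assoc], ?_, ?_⟩ <;>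
    rw [atZero_mul, atZero_shift_of_atZero_eq_C hB]
  · exact hRB
  · rw [rootMultiplicity_mul hRB, rootMultiplicity_C, add_zero, hm]

lemma natDegree_atZero_le_of_shift_mul {A B : Polynomial (PowerSeries K)} {f : PowerSeries K}
    {t m : ℕ} {c : K} (hc : c ≠ 0) (hB : atZero B = Polynomial.C c)
    (hA : ∀ (s : ℕ) (Qi : Polynomial (PowerSeries K)),
      shift A f t = Polynomial.C ((PowerSeries.X : PowerSeries K) ^ s) * Qi →
      atZero Qi ≠ 0 → (atZero Qi).natDegree ≤ m)
    (s : ℕ) (Qi : Polynomial (PowerSeries K))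
    (hQi : shift (A * B) f t = Polynomial.C ((PowerSeries.X : PowerSeries K) ^ s) * Qi)
    (hQi0 : atZero Qi ≠ 0) : (atZero Qi).natDegree ≤ m := by
  have hBf := atZero_shift_of_atZero_eq_C hB f t
  rw [shift_mul] at hQi
  obtain ⟨Ai, hAi, rfl⟩ :=
    exists_eq_C_X_pow_mul_of_mul_eq (by rw [hBf]; exact Polynomial.C_ne_zero.mpr hc) hQi
  rw [atZero_mul, hBf] at hQi0 ⊢
  rw [natDegree_mul_C hc]
  exact hA s Ai hAi (left_ne_zero_of_mul hQi0)

lemma natDegree_atZero_mul_of_atZero_eq_C (A : Polynomial (PowerSeries K))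
    {B : Polynomial (PowerSeries K)} {c : K} (hc : c ≠ 0) (hB : atZero B = Polynomial.C c) :
    (atZero (A * B)).natDegree = (atZero A).natDegree := by
  rw [atZero_mul, hB, natDegree_mul_C hc]

end AffineFactor

theorem reduced_root_set_affine_factor_general {K : Type*} [Field K]
    (Q A B : Polynomial (PowerSeries K))
    (hQ : Q = A * B)
    (hB : ∃ c : K, c ≠ 0 ∧ atZero B = Polynomial.C c)
    (d : ℤ) (ℓ : ℕ) (F : Fin ℓ → Polynomial K × ℕ)
    (hF : IsReducedRootSet A d F) :
    IsReducedRootSet Q d F := by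
  obtain ⟨c, hc, hBc⟩ := hB
  subst hQ
  obtain ⟨hbasic, hreduced⟩ := hF
  refine ⟨hbasic.mul_of_isUnit_eval (isUnit_eval_of_atZero_eq_C hc hBc), fun hd => ?_⟩
  obtain ⟨m, hne, hmult, hpos, hdeg, hsum⟩ := hreduced hd
  exact ⟨m, hne, fun i => (hmult i).mul_of_atZero_eq_C hc hBc, hpos,
    fun i => natDegree_atZero_le_of_shift_mul hc hBc (hdeg i),
    natDegree_atZero_mul_of_atZero_eq_C A hc hBc ▸ hsum⟩

/-- any reduced root set of the affine factor `A` of `Q` to precision `d`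
is also a reduced root set of `Q` to precision `d`. -/
theorem reduced_root_set_affine_factor {K : Type*} [Field K]
    (Q A B : Polynomial (PowerSeries K)) (h0 : atZero Q ≠ 0)
    (hQ : Q = A * B) (hA : A.Monic)
    (hB : ∃ c : K, c ≠ 0 ∧ atZero B = Polynomial.C c)
    (d : ℤ) (ℓ : ℕ) (F : Fin ℓ → Polynomial K × ℕ)
    (hF : IsReducedRootSet A d F) :
    IsReducedRootSet Q d F :=
  reduced_root_set_affine_factor_general Q A B hQ hB d ℓ F hF
end
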